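/- arXiv:1509.09137 — 2 statements merged into one kernel-verified Lean document; each statement's English description precedes it below -/
import Mathlib

section
/- Let N ≥ 1 and let P : Fin N → ℕ → Prop be N predicates on positions of an infinite run. Define a counter ℓ : ℕ → Fin N by ℓ(0) = 0 and ℓ(i+1) = ℓ(i) if ¬P(ℓ(i))(i), and ℓ(i+1) = ℓ(i) + 1 (mod N) if P(ℓ(i))(i). Then the set { i ∈ ℕ : ℓ(i) = N−1 ∧ P(N−1)(i) } is infinite if and only if for every k ∈ Fin N the set { i ∈ ℕ : P(k)(i) } is infinite. -/
/-- Correctness of the round-robin counter of the product Büchi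
WTS construction: with `ℓ 0 = 0` and `ℓ` incremented (mod `N`) exactly when
`P (ℓ i) i` holds, the set of positions where `ℓ i = N-1` and `P (N-1) i` is
infinite iff every `P k` holds at infinitely many positions. -/
theorem round_robin_counter_correct
    (N : ℕ) [NeZero N] (P : Fin N → ℕ → Prop) (ℓ : ℕ → Fin N)
    (h0 : ℓ 0 = 0)
    (hstay : ∀ i : ℕ, ¬ P (ℓ i) i → ℓ (i + 1) = ℓ i)
    (hinc : ∀ i : ℕ, P (ℓ i) i → ℓ (i + 1) = ℓ i + 1) :
    { i : ℕ | ℓ i = (⟨N - 1, Nat.sub_lt (Nat.pos_of_ne_zero (NeZero.ne N)) one_pos⟩ : Fin N)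
        ∧ P ⟨N - 1, Nat.sub_lt (Nat.pos_of_ne_zero (NeZero.ne N)) one_pos⟩ i }.Infinite
      ↔ ∀ k : Fin N, { i : ℕ | P k i }.Infinite := by
  classical
  have hN : 0 < N := Nat.pos_of_ne_zero (NeZero.ne N)
  set last : Fin N := ⟨N - 1, Nat.sub_lt hN one_pos⟩ with hlastdef
  have hlastval : (last : Fin N).val = N - 1 := rfl
  have hA : { i : ℕ | ℓ i = (⟨N - 1, Nat.sub_lt (Nat.pos_of_ne_zero (NeZero.ne N)) one_pos⟩ : Fin N)
        ∧ P ⟨N - 1, Nat.sub_lt (Nat.pos_of_ne_zero (NeZero.ne N)) one_pos⟩ i }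
      = { i : ℕ | ℓ i = last ∧ P last i } := rfl
  rw [hA]
  have h1v : ((1 : Fin N)).val = 1 % N := rfl
  have h0v : ((0 : Fin N)).val = 0 % N := rfl
  -- value of an increment that does not wrap
  have hval1 : ∀ c : Fin N, c.val + 1 < N → ((c + 1 : Fin N)).val = c.val + 1 := by
    intro c h
    have h2 : 1 < N := lt_of_le_of_lt (Nat.le_add_left 1 c.val) h
    have hd : ((c + 1 : Fin N)).val = (c.val + (1 : Fin N).val) % N := by
      simp [Fin.add_def]
    rw [hd, h1v, Nat.mod_eq_of_lt h2, Nat.mod_eq_of_lt h]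
  -- wrap-around
  have hwrap : (last + 1 : Fin N) = 0 := by
    apply Fin.ext
    have hd : ((last + 1 : Fin N)).val = (last.val + (1 : Fin N).val) % N := by
      simp [Fin.add_def]
    rw [hd, h1v, h0v, hlastval]
    rcases Nat.lt_or_ge 1 N with h2 | h2
    · have h4 : 1 % N = 1 := Nat.mod_eq_of_lt h2
      have h3 : N - 1 + 1 % N = N := by omega
      rw [h3, Nat.mod_self, Nat.zero_mod]
    · interval_cases N
      rfl
  -- if no increment happens on [m, i), the counter is constant there
  have hconst : ∀ m i, m ≤ i → (∀ t, m ≤ t → t < i → ¬ P (ℓ t) t) → ℓ i = ℓ m := by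
    intro m i hmi
    induction i, hmi using Nat.le_induction with
    | base => intro _; rfl
    | succ i hi ih =>
      intro h
      rw [hstay i (h i hi (Nat.lt_succ_self i))]
      exact ih (fun t ht htl => h t ht (Nat.lt_succ_of_lt htl))
  constructor
  · -- forward direction
    intro hInf k
    rcases eq_or_ne k last with hk | hk
    · subst hk
      exact hInf.mono (fun i hi => hi.2)
    · have hklt : k.val < N - 1 := by
        have hik := k.isLt
        rcases Nat.lt_or_ge k.val (N - 1) with h | h
        · exact h
        · exact absurd (Fin.ext (by rw [hlastval]; omega)) hk
      apply Set.infinite_of_forall_exists_gt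
      intro m
      obtain ⟨i₀, hi₀A, hi₀⟩ := hInf.exists_gt m
      obtain ⟨i₁, hi₁A, hi₁⟩ := hInf.exists_gt i₀
      have h00 : ℓ (i₀ + 1) = 0 := by
        rw [hinc i₀ (by rw [hi₀A.1]; exact hi₀A.2), hi₀A.1, hwrap]
      have hex : ∃ j, i₀ + 1 ≤ j ∧ k.val < (ℓ j).val := by
        refine ⟨i₁, hi₁, ?_⟩
        rw [hi₁A.1, hlastval]
        exact hklt
      have htspec : i₀ + 1 ≤ Nat.find hex ∧ k.val < (ℓ (Nat.find hex)).val :=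
        Nat.find_spec hex
      set t := Nat.find hex with htdef
      have htne : t ≠ i₀ + 1 := by
        intro h
        have h2 := htspec.2
        rw [h, h00] at h2
        simp [h0v, Nat.zero_mod] at h2
      have ht1 : i₀ + 1 ≤ t := htspec.1
      obtain ⟨s, hs⟩ : ∃ s, t = s + 1 := ⟨t - 1, by omega⟩
      have hs1 : i₀ + 1 ≤ s := by omega
      have hsmin : ¬ (i₀ + 1 ≤ s ∧ k.val < (ℓ s).val) := Nat.find_min hex (by omega)
      have hsle : (ℓ s).val ≤ k.val := by
        by_contra h
        exact hsmin ⟨hs1, by omega⟩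
      have hPs : P (ℓ s) s := by
        by_contra h
        have heq := hstay s h
        rw [← hs] at heq
        have h2 := htspec.2
        rw [heq] at h2
        omega
      have hts : ℓ t = ℓ s + 1 := by rw [hs]; exact hinc s hPs
      have hvt : (ℓ t).val = (ℓ s).val + 1 := by
        rw [hts]; exact hval1 _ (by omega)
      have hsk : ℓ s = k := by
        apply Fin.ext
        have h2 := htspec.2
        omega
      exact ⟨s, by rw [← hsk]; exact hPs, by omega⟩
  · -- backward direction
    intro hP
    -- an increment eventually happens after any position
    have hexinc : ∀ m, ∃ i, m ≤ i ∧ P (ℓ i) i := by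
      intro m
      by_contra h
      push_neg at h
      have hc : ∀ i, m ≤ i → ℓ i = ℓ m := fun i hi =>
        hconst m i hi (fun t ht _ => h t ht)
      obtain ⟨i, hi, hgt⟩ := (hP (ℓ m)).exists_gt m
      exact h i (le_of_lt hgt) (by rw [hc i (le_of_lt hgt)]; exact hi)
    -- the first increment after m happens with the counter still at ℓ m
    have hstep : ∀ m, ∃ i, m ≤ i ∧ ℓ i = ℓ m ∧ P (ℓ m) i := by
      intro m
      have hex := hexinc m
      have hQ := Nat.find_spec hex
      have heq : ℓ (Nat.find hex) = ℓ m :=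
        hconst m (Nat.find hex) hQ.1
          (fun t ht htl hp => Nat.find_min hex htl ⟨ht, hp⟩)
      exact ⟨Nat.find hex, hQ.1, heq, heq ▸ hQ.2⟩
    have main : ∀ d m, (N - 1) - (ℓ m).val ≤ d →
        ∃ j, m ≤ j ∧ ℓ j = last ∧ P last j := by
      intro d
      induction d with
      | zero =>
        intro m hm
        have hml : ℓ m = last := by
          apply Fin.ext
          have hil := (ℓ m).isLt
          rw [hlastval]
          omega
        obtain ⟨i, hi, heq, hp⟩ := hstep m
        exact ⟨i, hi, by rw [heq, hml], by rw [← hml]; exact hp⟩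
      | succ d ih =>
        intro m hm
        by_cases hml : ℓ m = last
        · obtain ⟨i, hi, heq, hp⟩ := hstep m
          exact ⟨i, hi, by rw [heq, hml], by rw [← hml]; exact hp⟩
        · have hmlt : (ℓ m).val < N - 1 := by
            have hil := (ℓ m).isLt
            rcases Nat.lt_or_ge (ℓ m).val (N - 1) with h | h
            · exact h
            · exact absurd (Fin.ext (by rw [hlastval]; omega)) hml
          obtain ⟨i, hi, heq, hp⟩ := hstep m
          have hnext : ℓ (i + 1) = ℓ m + 1 := by
            rw [hinc i (by rw [heq]; exact hp), heq]
          have hvn : (ℓ (i + 1)).val = (ℓ m).val + 1 := by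
            rw [hnext]; exact hval1 _ (by omega)
          obtain ⟨j, hj, hjl, hjp⟩ := ih (i + 1) (by omega)
          exact ⟨j, by omega, hjl, hjp⟩
    apply Set.infinite_of_forall_exists_gt
    intro m
    obtain ⟨j, hj, hjl, hjp⟩ := main (N - 1) (m + 1) (by omega)
    exact ⟨j, ⟨hjl, hjp⟩, by omega⟩
end

section
/- Let P, Q : ℕ → Prop be two predicates on positions of an infinite run and let ℓ : ℕ → Fin 2 be any sequence (with values thought of as 1 and 2) satisfying the update rule: ℓ(i+1) = 1 if (ℓ(i) = 1 ∧ ¬P(i)) or (ℓ(i) = 2 ∧ Q(i)), and ℓ(i+1) = 2 otherwise. Then the set { i ∈ ℕ : ℓ(i) = 1 ∧ P(i) } is infinite if and only if both { i ∈ ℕ : P(i) } and { i ∈ ℕ : Q(i) } are infinite. -/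
/-- Correctness of the two-valued flag of the global Büchi WTS
construction. Values `0` and `1` of `Fin 2` play the roles of `1` and `2`:
the flag moves to (or stays at) `0` exactly when (`ℓ i = 0` and `¬ P i`) or
(`ℓ i = 1` and `Q i`), and is `1` otherwise. Positions with flag `0` and `P`
are infinite iff both `P` and `Q` hold infinitely often. -/
theorem two_flag_intersection_correct
    (P Q : ℕ → Prop) (ℓ : ℕ → Fin 2)
    (hrule : ∀ i : ℕ,
      ((ℓ i = 0 ∧ ¬ P i) ∨ (ℓ i = 1 ∧ Q i) → ℓ (i + 1) = 0) ∧
      (¬ ((ℓ i = 0 ∧ ¬ P i) ∨ (ℓ i = 1 ∧ Q i)) → ℓ (i + 1) = 1)) :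
    { i : ℕ | ℓ i = 0 ∧ P i }.Infinite ↔
      { i : ℕ | P i }.Infinite ∧ { i : ℕ | Q i }.Infinite := by
  have fin2 : ∀ x : Fin 2, x = 0 ∨ x = 1 := by decide
  -- flag stays 1 while no Q
  have stay1 : ∀ a b, a ≤ b → ℓ a = 1 → (∀ j, a ≤ j → j < b → ¬ Q j) → ℓ b = 1 := by
    intro a b hab h1 hQ
    induction b, hab using Nat.le_induction with
    | base => exact h1
    | succ n hn ih =>
      have hℓn : ℓ n = 1 := ih (fun j hj hj' => hQ j hj (Nat.lt_succ_of_lt hj'))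
      exact (hrule n).2 (by
        rintro (⟨h0, _⟩ | ⟨_, hq⟩)
        · rw [hℓn] at h0; exact absurd h0 (by decide)
        · exact hQ n hn (Nat.lt_succ_self n) hq)
  -- flag stays 0 while no P
  have stay0 : ∀ a b, a ≤ b → ℓ a = 0 → (∀ j, a ≤ j → j < b → ¬ P j) → ℓ b = 0 := by
    intro a b hab h0 hP
    induction b, hab using Nat.le_induction with
    | base => exact h0
    | succ n hn ih =>
      have hℓn : ℓ n = 0 := ih (fun j hj hj' => hP j hj (Nat.lt_succ_of_lt hj'))
      exact (hrule n).1 (Or.inl ⟨hℓn, hP n hn (Nat.lt_succ_self n)⟩)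
  constructor
  · intro h
    refine ⟨h.mono (fun i hi => hi.2), Set.infinite_of_forall_exists_gt ?_⟩
    intro a
    obtain ⟨i, hi, hai⟩ := h.exists_gt a
    -- ℓ (i+1) = 1
    have h1 : ℓ (i + 1) = 1 := by
      refine (hrule i).2 ?_
      rintro (⟨_, hnp⟩ | ⟨h1, _⟩)
      · exact hnp hi.2
      · rw [hi.1] at h1; exact absurd h1 (by decide)
    obtain ⟨k, hk, hik⟩ := h.exists_gt (i + 1)
    -- some Q in [i+1, k)
    by_contra hcon
    push_neg at hcon
    have : ℓ k = 1 := stay1 (i + 1) k (le_of_lt hik) h1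
      (fun j hj _ => fun hq => (hcon j hq).not_gt (lt_of_lt_of_le hai (le_trans (Nat.le_succ i) hj)))
    rw [hk.1] at this; exact absurd this (by decide)
  · rintro ⟨hP, hQ⟩
    by_contra hfin
    rw [Set.not_infinite] at hfin
    obtain ⟨N, hN⟩ := hfin.bddAbove
    have hnot : ∀ i, N + 1 ≤ i → ¬ (ℓ i = 0 ∧ P i) := by
      intro i hi hip
      exact absurd (hN hip) (by omega)
    -- claim: no i ≥ N+1 has ℓ i = 0
    have hno0 : ∀ i, N + 1 ≤ i → ℓ i ≠ 0 := by
      intro i hi h0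
      have hall0 : ∀ m, i ≤ m → ℓ m = 0 := by
        intro m him
        induction m, him using Nat.le_induction with
        | base => exact h0
        | succ n hn ih =>
          have hnp : ¬ P n := fun hp => hnot n (le_trans hi hn) ⟨ih, hp⟩
          exact (hrule n).1 (Or.inl ⟨ih, hnp⟩)
      obtain ⟨m, hm, him⟩ := hP.exists_gt i
      exact hnot m (le_trans hi (le_of_lt him)) ⟨hall0 m (le_of_lt him), hm⟩
    -- so flag is 1 from N+1 on; but Q infinite gives a 0
    obtain ⟨j, hj, hNj⟩ := hQ.exists_gt N
    have hj1 : ℓ j = 1 := (fin2 (ℓ j)).resolve_left (hno0 j hNj)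
    have : ℓ (j + 1) = 0 := (hrule j).1 (Or.inr ⟨hj1, hj⟩)
    exact hno0 (j + 1) (by omega) this
end
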